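/- arXiv:1906.01065 — 4 statements merged into one kernel-verified Lean document; each statement's English description precedes it below -/
import Mathlib

section
/- Let λ > 0 and b ≥ 0 satisfy λ > b. Then the equation λ·sin(γ) = b has a unique solution γ_s in [0, π/2), and the equation (π/2)·λ·sinc(γ) = b, where sinc(γ) = sin(γ)/γ, has a unique solution γ_m in (π/2, π]; moreover γ_s ≤ γ_m. -/
open Real

/-- The cardinal sine function `sinc x = sin x / x`, with `sinc 0 = 1`. -/
noncomputable def sinc (x : ℝ) : ℝ := if x = 0 then 1 else Real.sin x / x

open Set

/-!
On `[0, π/2)` the sine is a strictly increasing bijection onto `[0, 1)`, so `γ_s = arcsin (b / λ)`.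
On `[π/2, π]` the sine decreases while `γ` increases, so `sinc` is continuous and strictly
decreasing there, from `2 / π` to `0`; the intermediate value theorem gives `γ_m`, and strict
monotonicity its uniqueness. Finally `γ_s < π/2 < γ_m`.
-/

lemma sinc_eq_real_sinc : _root_.sinc = Real.sinc := rfl

lemma strictAntiOn_sin_Icc_pi_div_two_pi : StrictAntiOn sin (Icc (π / 2) π) := by
  intro x hx y hy hxy
  rw [← sin_pi_sub x, ← sin_pi_sub y]
  exact strictMonoOn_sin ⟨by linarith [hy.2, pi_pos], by linarith [hy.1]⟩
    ⟨by linarith [hx.2, pi_pos], by linarith [hx.1]⟩ (by linarith)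

lemma strictAntiOn_sinc_Icc_pi_div_two_pi : StrictAntiOn Real.sinc (Icc (π / 2) π) := by
  intro x hx y hy hxy
  have hx0 : 0 < x := (half_pos pi_pos).trans_le hx.1
  have hy0 : 0 < y := hx0.trans hxy
  have hsin_x : 0 < sin x := sin_pos_of_pos_of_lt_pi hx0 (hxy.trans_le hy.2)
  have hsin_y : 0 ≤ sin y := sin_nonneg_of_nonneg_of_le_pi hy0.le hy.2
  rw [Real.sinc_of_ne_zero hx0.ne', Real.sinc_of_ne_zero hy0.ne']
  calc sin y / y < sin x / y := by
        gcongr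
        exact strictAntiOn_sin_Icc_pi_div_two_pi hx hy hxy
    _ < sin x / x := div_lt_div_of_pos_left hsin_x hx0 hxy

theorem StrictAntiOn.existsUnique_mem_Ioc_eq {α δ : Type*} [ConditionallyCompleteLinearOrder α]
    [TopologicalSpace α] [OrderTopology α] [DenselyOrdered α] [LinearOrder δ]
    [TopologicalSpace δ] [OrderClosedTopology δ] {f : α → δ} {a b : α} {y : δ}
    (hf : StrictAntiOn f (Icc a b)) (hcont : ContinuousOn f (Icc a b)) (hab : a ≤ b)
    (hy : y ∈ Ico (f b) (f a)) : ∃! x, x ∈ Ioc a b ∧ f x = y := by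
  obtain ⟨x, hx, rfl⟩ := intermediate_value_Icc' hab hcont (Ico_subset_Icc_self hy)
  have hax : a ≠ x := by
    rintro rfl
    exact hy.2.false
  exact ⟨x, ⟨⟨hx.1.lt_of_ne hax, hx.2⟩, rfl⟩,
    fun z hz ↦ hf.injOn (Ioc_subset_Icc_self hz.1) hx hz.2⟩

lemma existsUnique_mem_Ico_mul_sin_eq {l b : ℝ} (hb : 0 ≤ b) (hlb : b < l) :
    ∃! γ : ℝ, γ ∈ Ico 0 (π / 2) ∧ l * sin γ = b := by
  have hl : 0 < l := hb.trans_lt hlb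
  have hbl : b / l ∈ Ico 0 1 := ⟨div_nonneg hb hl.le, (div_lt_one hl).mpr hlb⟩
  refine ⟨arcsin (b / l), ⟨⟨arcsin_nonneg.mpr hbl.1, arcsin_lt_pi_div_two.mpr hbl.2⟩, ?_⟩, ?_⟩
  · rw [sin_arcsin (by linarith [hbl.1]) hbl.2.le]
    field_simp
  · rintro γ ⟨hγ, rfl⟩
    rw [mul_div_cancel_left₀ _ hl.ne', arcsin_sin (by linarith [hγ.1, pi_pos]) hγ.2.le]

lemma existsUnique_mem_Ioc_mul_sinc_eq {l b : ℝ} (hb : 0 ≤ b) (hlb : b < l) :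
    ∃! γ : ℝ, γ ∈ Ioc (π / 2) π ∧ π / 2 * l * _root_.sinc γ = b := by
  have hl : 0 < l := hb.trans_lt hlb
  have hpi_half : π / 2 ≠ 0 := (half_pos pi_pos).ne'
  rw [sinc_eq_real_sinc]
  refine StrictAntiOn.existsUnique_mem_Ioc_eq
    (fun x hx y hy hxy ↦ mul_lt_mul_of_pos_left
      (strictAntiOn_sinc_Icc_pi_div_two_pi hx hy hxy) (by positivity))
    (by fun_prop) (by linarith [pi_pos]) ⟨?_, ?_⟩
  · simpa [Real.sinc_of_ne_zero pi_ne_zero] using hb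
  · rwa [Real.sinc_of_ne_zero hpi_half, sin_pi_div_two, mul_right_comm,
      mul_one_div_cancel hpi_half, one_mul]

theorem stmt_6_general (l b : ℝ) (hb : 0 ≤ b) (hlb : b < l) :
    (∃! γs : ℝ, γs ∈ Set.Ico 0 (π / 2) ∧ l * Real.sin γs = b) ∧
    (∃! γm : ℝ, γm ∈ Set.Ioc (π / 2) π ∧ (π / 2) * l * _root_.sinc γm = b) ∧
    (∀ γs γm : ℝ, γs ∈ Set.Ico 0 (π / 2) → l * Real.sin γs = b →
      γm ∈ Set.Ioc (π / 2) π → (π / 2) * l * _root_.sinc γm = b → γs ≤ γm) :=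
  ⟨existsUnique_mem_Ico_mul_sin_eq hb hlb, existsUnique_mem_Ioc_mul_sinc_eq hb hlb,
    fun _ _ hs _ hm _ ↦ (hs.2.trans hm.1).le⟩

/-- for `λ > b ≥ 0`, `λ > 0`, the equation `λ·sin γ = b` has a unique
solution `γ_s ∈ [0, π/2)`, the equation `(π/2)·λ·sinc γ = b` has a unique solution
`γ_m ∈ (π/2, π]`, and `γ_s ≤ γ_m`. -/
theorem stmt_6 (l b : ℝ) (hl : 0 < l) (hb : 0 ≤ b) (hlb : b < l) :
    (∃! γs : ℝ, γs ∈ Set.Ico 0 (π / 2) ∧ l * Real.sin γs = b) ∧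
    (∃! γm : ℝ, γm ∈ Set.Ioc (π / 2) π ∧ (π / 2) * l * _root_.sinc γm = b) ∧
    (∀ γs γm : ℝ, γs ∈ Set.Ico 0 (π / 2) → l * Real.sin γs = b →
      γm ∈ Set.Ioc (π / 2) π → (π / 2) * l * _root_.sinc γm = b → γs ≤ γm) :=
  stmt_6_general l b hb hlb
end

section
/- Let x_1, …, x_n ∈ ℝ with max_i x_i − min_i x_i = φ ∈ [0, π], and let m, s be indices achieving the maximum and minimum. Then ∑_{j=1}^{n} (sin(x_m − x_j) − sin(x_s − x_j)) ≥ n·sin(φ). -/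
open Real

theorem Real.sin_add_le_sin_add_sin {a b : ℝ} (ha : 0 ≤ a) (hb : 0 ≤ b) (hab : a + b ≤ π) :
    sin (a + b) ≤ sin a + sin b := by
  have hsin_a : 0 ≤ sin a := sin_nonneg_of_nonneg_of_le_pi ha (by linarith)
  have hsin_b : 0 ≤ sin b := sin_nonneg_of_nonneg_of_le_pi hb (by linarith)
  calc sin (a + b) = sin a * cos b + cos a * sin b := sin_add a b
    _ ≤ sin a * 1 + 1 * sin b := by
      gcongr
      · exact cos_le_one b
      · exact cos_le_one a
    _ = sin a + sin b := by ring

/-- with `x_m` the max, `x_s` the min and `x_m − x_s = φ ∈ [0, π]`,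
`∑_j (sin(x_m − x_j) − sin(x_s − x_j)) ≥ n·sin φ`. -/
theorem stmt_10 (n : ℕ) (x : Fin n → ℝ) (m s : Fin n)
    (hm : ∀ j, x j ≤ x m) (hs : ∀ j, x s ≤ x j)
    (φ : ℝ) (hφ : φ ∈ Set.Icc 0 π) (hms : x m - x s = φ) :
    (n : ℝ) * Real.sin φ ≤ ∑ j, (Real.sin (x m - x j) - Real.sin (x s - x j)) := by
  have hsummand : ∀ j, sin φ ≤ sin (x m - x j) - sin (x s - x j) := fun j => by
    have hsplit : φ = (x m - x j) + (x j - x s) := by rw [← hms]; ring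
    rw [← neg_sub (x j) (x s), sin_neg, sub_neg_eq_add, hsplit]
    exact sin_add_le_sin_add_sin (sub_nonneg.2 (hm j)) (sub_nonneg.2 (hs j)) (hsplit ▸ hφ.2)
  calc (n : ℝ) * sin φ = ∑ _j : Fin n, sin φ := by simp
    _ ≤ _ := Finset.sum_le_sum fun j _ => hsummand j
end

section
/- Let φ_s = arcsin(b/c) with 0 ≤ b < c. Then for any continuous function γ: [0,∞) → [0, π] with φ_s < γ(0) < π − φ_s, if γ satisfies the differential inequality D⁺γ(t) ≤ b − c·sin(γ(t)) for all t (upper Dini derivative), then γ(t) ≤ max(γ(0), φ_s) for all t ≥ 0 and lim sup_{t→∞} γ(t) ≤ φ_s. -/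
/-!
While `γ` lies in `(φ_s, π - φ_s)` the bound `b - c sin γ` is negative, so `γ` can never cross a
level of that interval upwards: at a first crossing its upper right Dini derivative would have to
be at least the (zero) slope of the level. Taking the level `γ 0` gives the first claim. On any
compact band `[ℓ, γ 0]` with `ℓ > φ_s` the bound is at most some `-δ < 0`, so comparison with the
line `γ 0 - δ t / 2` forces `γ` below `ℓ` in finite time, after which it stays below `ℓ`.
-/

open Real Filter Set Topology

/-- The upper right Dini derivative `D⁺f(t)`. Being real-valued, it is `0` when the difference
quotient is unbounded above, so only negative upper bounds on it carry information. -/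
noncomputable def upperDini (f : ℝ → ℝ) (t : ℝ) : ℝ :=
  limsup (fun τ : ℝ => (f (t + τ) - f t) / τ) (𝓝[>] 0)

lemma frequently_slope_lt_of_upperDini_lt {f : ℝ → ℝ} {x r : ℝ} (h : upperDini f x < r)
    (hr : r ≤ 0) : ∃ᶠ z in 𝓝[>] x, slope f x z < r := by
  have hquot : ∃ᶠ τ in 𝓝[>] (0 : ℝ), (f (x + τ) - f x) / τ < r := by
    by_contra hev
    rw [not_frequently] at hev
    by_cases hbdd : IsBoundedUnder (· ≤ ·) (𝓝[>] (0 : ℝ)) fun τ => (f (x + τ) - f x) / τ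
    · exact (le_limsup_of_frequently_le (hev.mono fun τ => le_of_not_gt).frequently hbdd).not_gt h
    · rw [upperDini, Real.limsup_of_not_isBoundedUnder hbdd] at h
      linarith
  have hshift : Tendsto (x + ·) (𝓝[>] (0 : ℝ)) (𝓝[>] x) := by
    have h := (Homeomorph.addLeft x).isEmbedding.map_nhdsWithin_eq (Ioi 0) 0
    simp only [Homeomorph.coe_addLeft, image_const_add_Ioi, add_zero] at h
    exact h.le
  exact hshift.frequently_map _ (fun τ hτ => by rwa [slope_def_field, add_sub_cancel_left]) hquot

theorem image_le_of_upperDini_lt_deriv_boundary {f B B' : ℝ → ℝ} {a b : ℝ}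
    (hf : ContinuousOn f (Icc a b)) (ha : f a ≤ B a) (hB : ContinuousOn B (Icc a b))
    (hB' : ∀ x ∈ Ico a b, HasDerivWithinAt B (B' x) (Ici x) x)
    (hB'_nonpos : ∀ x ∈ Ico a b, B' x ≤ 0)
    (bound : ∀ x ∈ Ico a b, f x = B x → upperDini f x < B' x) :
    ∀ ⦃x⦄, x ∈ Icc a b → f x ≤ B x := by
  have hfB : ContinuousOn (fun x => (f x, B x)) (Icc a b) := hf.prodMk hB
  have hclosed : IsClosed ({x | f x ≤ B x} ∩ Icc a b) := by
    rw [inter_comm]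
    exact hfB.preimage_isClosed_of_isClosed isClosed_Icc OrderClosedTopology.isClosed_le'
  refine fun x hx => hclosed.Icc_subset_of_forall_exists_gt ha ?_ hx
  rintro x ⟨hxB : f x ≤ B x, hx⟩ y hy
  rcases hxB.lt_or_eq with hlt | hcontact
  · have hnear : ∀ᶠ z in 𝓝[>] x, f z < B z :=
      nhdsWithin_le_of_mem (Icc_mem_nhdsGT_of_mem hx) <| hfB x (Ico_subset_Icc_self hx)
        ((isOpen_lt continuous_fst continuous_snd).mem_nhds hlt)
    exact (hnear.and (Ioc_mem_nhdsGT hy)).exists.imp fun z hz => ⟨hz.1.le, hz.2⟩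
  · obtain ⟨r, hfr, hrB⟩ := exists_between (bound x hx hcontact)
    have hslope_f := frequently_slope_lt_of_upperDini_lt hfr (hrB.le.trans (hB'_nonpos x hx))
    have hslope_B : ∀ᶠ z in 𝓝[>] x, r < slope B x z :=
      (hasDerivWithinAt_iff_tendsto_slope' (lt_irrefl x)).1 (hB' x hx).Ioi_of_Ici
        (Ioi_mem_nhds hrB)
    obtain ⟨z, hfz, hBz, hz⟩ : ∃ z, slope f x z < r ∧ r < slope B x z ∧ z ∈ Ioc x y :=
      (hslope_f.and_eventually (hslope_B.and (Ioc_mem_nhdsGT hy))).exists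
    refine ⟨z, ?_, hz⟩
    have := (hfz.trans hBz).le
    rwa [slope_def_field, slope_def_field, div_le_div_iff_of_pos_right (sub_pos.2 hz.1),
      hcontact, sub_le_sub_iff_right] at this

section Comparison

variable {γ g : ℝ → ℝ}

lemma le_of_upperDini_le_of_neg {t₀ ℓ : ℝ} (hγ : ContinuousOn γ (Ici t₀))
    (hD : ∀ t ≥ t₀, upperDini γ t ≤ g (γ t)) (h₀ : γ t₀ ≤ ℓ) (hℓ : g ℓ < 0) :
    ∀ t ≥ t₀, γ t ≤ ℓ := fun _ ht =>
  image_le_of_upperDini_lt_deriv_boundary (B := fun _ => ℓ) (B' := fun _ => 0)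
    (hγ.mono Icc_subset_Ici_self) h₀ continuousOn_const
    (fun x _ => hasDerivWithinAt_const x _ ℓ) (fun _ _ => le_rfl)
    (fun x hx hxℓ => (hD x hx.1).trans_lt (hxℓ ▸ hℓ)) ⟨ht, le_rfl⟩

lemma exists_le_of_upperDini_le_of_le_neg {ℓ M δ : ℝ} (hγ : ContinuousOn γ (Ici 0))
    (hD : ∀ t ≥ 0, upperDini γ t ≤ g (γ t)) (hM : ∀ t ≥ 0, γ t ≤ M) (hδ : 0 < δ)
    (hg : ∀ y ∈ Icc ℓ M, g y ≤ -δ) : ∃ t ≥ 0, γ t ≤ ℓ := by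
  by_contra! habove
  set T := 2 * (γ 0 - ℓ) / δ
  have hT : 0 ≤ T := div_nonneg (by linarith [habove 0 le_rfl]) hδ.le
  have hbarrier := image_le_of_upperDini_lt_deriv_boundary (f := γ) (a := 0) (b := T)
    (B := fun t => γ 0 - δ / 2 * t) (B' := fun _ => -(δ / 2))
    (hγ.mono Icc_subset_Ici_self) (by simp) (by fun_prop)
    (fun x _ => by simpa using ((hasDerivWithinAt_id x (Ici x)).const_mul (δ / 2)).const_sub (γ 0))
    (fun _ _ => by linarith)
    (fun x hx _ => (hD x hx.1).trans_lt <|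
      (hg _ ⟨(habove x hx.1).le, hM x hx.1⟩).trans_lt (by linarith))
    ⟨hT, le_rfl⟩
  have hTval : γ 0 - δ / 2 * T = ℓ := by simp only [T]; field_simp; ring
  linarith [habove T hT]

lemma eventually_le_of_upperDini_le {ℓ M : ℝ} (hγ : ContinuousOn γ (Ici 0))
    (hD : ∀ t ≥ 0, upperDini γ t ≤ g (γ t)) (hM : ∀ t ≥ 0, γ t ≤ M)
    (hg : ContinuousOn g (Icc ℓ M)) (hneg : ∀ y ∈ Icc ℓ M, g y < 0) :
    ∀ᶠ t in atTop, γ t ≤ ℓ := by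
  rcases lt_or_ge M ℓ with hMℓ | hℓM
  · exact eventually_atTop.2 ⟨0, fun t ht => (hM t ht).trans hMℓ.le⟩
  -- a continuous function negative on a compact interval is bounded away from zero there
  obtain ⟨y₀, hy₀, hmax⟩ := isCompact_Icc.exists_isMaxOn (nonempty_Icc.2 hℓM) hg
  obtain ⟨t₁, ht₁, hreach⟩ := exists_le_of_upperDini_le_of_le_neg hγ hD hM
    (neg_pos.2 (hneg y₀ hy₀)) fun y hy => (neg_neg (g y₀)).symm ▸ hmax hy
  exact eventually_atTop.2 ⟨t₁, le_of_upperDini_le_of_neg (hγ.mono (Ici_subset_Ici.2 ht₁))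
    (fun t ht => hD t (ht₁.trans ht)) hreach (hneg ℓ ⟨le_rfl, hℓM⟩)⟩

end Comparison

lemma Real.lt_sin_of_arcsin_lt_of_lt_pi_sub_arcsin {x y : ℝ} (h₁ : arcsin x < y)
    (h₂ : y < π - arcsin x) : x < sin y := by
  have hlow := neg_pi_div_two_le_arcsin x
  rcases le_or_gt y (π / 2) with hy | hy
  · exact (arcsin_lt_iff_lt_sin' ⟨by linarith, hy⟩).1 h₁
  · rw [← sin_pi_sub]
    exact (arcsin_lt_iff_lt_sin' ⟨by linarith, by linarith⟩).1 (by linarith)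

theorem stmt_17_general (b c : ℝ) (hc : 0 < c)
    (γ : ℝ → ℝ) (hcont : ContinuousOn γ (Set.Ici 0))
    (hrange : ∀ t ≥ (0 : ℝ), γ t ∈ Set.Icc 0 π)
    (h0l : Real.arcsin (b / c) < γ 0) (h0u : γ 0 < π - Real.arcsin (b / c))
    (hDini : ∀ t ≥ (0 : ℝ),
      Filter.limsup (fun τ : ℝ => (γ (t + τ) - γ t) / τ) (nhdsWithin 0 (Set.Ioi 0))
        ≤ b - c * Real.sin (γ t)) :
    (∀ t ≥ (0 : ℝ), γ t ≤ max (γ 0) (Real.arcsin (b / c))) ∧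
    Filter.limsup γ Filter.atTop ≤ Real.arcsin (b / c) := by
  set φ := arcsin (b / c)
  have hD : ∀ t ≥ 0, upperDini γ t ≤ (fun y => b - c * sin y) (γ t) := hDini
  have hneg : ∀ y ∈ Ioo φ (π - φ), b - c * sin y < 0 := fun y hy => by
    have := (div_lt_iff₀' hc).1 (lt_sin_of_arcsin_lt_of_lt_pi_sub_arcsin hy.1 hy.2)
    linarith
  have hle : ∀ t ≥ 0, γ t ≤ γ 0 :=
    le_of_upperDini_le_of_neg (g := fun y => b - c * sin y) hcont hD le_rfl (hneg _ ⟨h0l, h0u⟩)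
  refine ⟨fun t ht => (hle t ht).trans (le_max_left _ _), ?_⟩
  have hcobdd : IsCoboundedUnder (· ≤ ·) atTop γ := isCoboundedUnder_le_of_eventually_le atTop
    (eventually_atTop.2 ⟨0, fun t ht => (hrange t ht).1⟩)
  refine le_of_forall_gt_imp_ge_of_dense fun ℓ hℓ => ?_
  have hφℓ : φ < min ℓ (γ 0) := lt_min hℓ h0l
  calc limsup γ atTop ≤ min ℓ (γ 0) := limsup_le_of_le hcobdd <|
        eventually_le_of_upperDini_le hcont hD hle (by fun_prop)
          fun y hy => hneg y ⟨hφℓ.trans_le hy.1, hy.2.trans_lt h0u⟩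
    _ ≤ ℓ := min_le_left _ _

/-- ultimate boundedness. If `γ : [0,∞) → [0,π]` is continuous, starts in
`(φ_s, π − φ_s)` with `φ_s = arcsin(b/c)`, and its upper Dini derivative satisfies
`D⁺γ(t) ≤ b − c·sin(γ(t))`, then `γ(t) ≤ max(γ(0), φ_s)` for all `t ≥ 0` and
`limsup_{t→∞} γ(t) ≤ φ_s`. -/
theorem stmt_17 (b c : ℝ) (hc : 0 < c) (hb : 0 ≤ b) (hbc : b < c)
    (γ : ℝ → ℝ) (hcont : ContinuousOn γ (Set.Ici 0))
    (hrange : ∀ t ≥ (0 : ℝ), γ t ∈ Set.Icc 0 π)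
    (h0l : Real.arcsin (b / c) < γ 0) (h0u : γ 0 < π - Real.arcsin (b / c))
    (hDini : ∀ t ≥ (0 : ℝ),
      Filter.limsup (fun τ : ℝ => (γ (t + τ) - γ t) / τ) (nhdsWithin 0 (Set.Ioi 0))
        ≤ b - c * Real.sin (γ t)) :
    (∀ t ≥ (0 : ℝ), γ t ≤ max (γ 0) (Real.arcsin (b / c))) ∧
    Filter.limsup γ Filter.atTop ≤ Real.arcsin (b / c) :=
  stmt_17_general b c hc γ hcont hrange h0l h0u hDini
end

section
/- For the Kuramoto system θ̇_i = ω_i + ∑_{j=1}^n K·sin(θ_j − θ_i) on the complete graph with uniform coupling K/1 (i.e., each pairwise coupling strength K), if n·K > max_{i,j}|ω_i − ω_j| =: a, then the set S(φ) = {θ : max_{i,j}|θ_i − θ_j| ≤ φ} is positively invariant for every φ ∈ [arcsin(a/(nK)), π − arcsin(a/(nK))]. -/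
/-!
Let `g t = max_{i,j} (θ t i - θ t j)`. As a maximum of finitely many differentiable
functions, `g` has right upper Dini derivative at most `θ̇ p - θ̇ q` for some pair `(p, q)`
attaining the maximum. All phases then lie in `[θ q, θ p]`, so superadditivity of `sin` on
`[0, 2π]` bounds each coupling term and gives
`θ̇ p - θ̇ q ≤ a - nK sin g ≤ nK (sin φ - sin g) ≤ nK (g - φ)` as long as `φ ≤ g ≤ 2π`.
A fencing argument against the barriers `φ + ε e^{(nK + 1) t}` then keeps `g ≤ φ`.
-/

open Real Set Filter Topology

namespace Real

theorem sin_add_le_sin_add_sin_s18 {x y : ℝ} (hx : 0 ≤ x) (hy : 0 ≤ y) (hxy : x + y ≤ 2 * π) :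
    sin (x + y) ≤ sin x + sin y := by
  have hsum : sin x + sin y = 2 * sin ((x + y) / 2) * cos ((x - y) / 2) := by
    rw [two_mul_sin_mul_cos]; ring_nf
  have hdouble : sin (x + y) = 2 * sin ((x + y) / 2) * cos ((x + y) / 2) := by
    rw [← sin_two_mul]; ring_nf
  have hsin : 0 ≤ sin ((x + y) / 2) := sin_nonneg_of_nonneg_of_le_pi (by linarith) (by linarith)
  have hcos : cos ((x + y) / 2) ≤ cos ((x - y) / 2) := by
    rw [← cos_abs ((x - y) / 2)]
    exact cos_le_cos_of_nonneg_of_le_pi (abs_nonneg _) (by linarith)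
      (abs_le.2 ⟨by linarith, by linarith⟩)
  rw [hsum, hdouble]
  have := mul_le_mul_of_nonneg_left hcos hsin
  linarith

theorem sin_sub_sub_sin_sub_le {x m M : ℝ} (hm : m ≤ x) (hM : x ≤ M) (h : M - m ≤ 2 * π) :
    sin (x - M) - sin (x - m) ≤ -sin (M - m) := by
  have := sin_add_le_sin_add_sin_s18 (sub_nonneg.2 hM) (sub_nonneg.2 hm) (by linarith)
  rw [sub_add_sub_cancel] at this
  rw [← neg_sub M x, sin_neg]
  linarith

theorem le_sin_of_arcsin_le_of_le_pi_sub {c φ : ℝ} (hc : c ∈ Icc (-1) 1)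
    (h₁ : arcsin c ≤ φ) (h₂ : φ ≤ π - arcsin c) : c ≤ sin φ := by
  rcases le_total φ (π / 2) with h | h
  · exact (arcsin_le_iff_le_sin hc ⟨(neg_pi_div_two_le_arcsin c).trans h₁, h⟩).1 h₁
  · rw [← sin_pi_sub]
    exact (arcsin_le_iff_le_sin hc ⟨by linarith [neg_pi_div_two_le_arcsin c], by linarith⟩).1
      (by linarith)

end Real

theorem eventually_slope_sup'_lt {ι : Type*} [Fintype ι] [Nonempty ι] {v : ι → ℝ → ℝ}
    {v' : ι → ℝ} {x r : ℝ} (hv : ∀ k, HasDerivWithinAt (v k) (v' k) (Ioi x) x)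
    (hr : ∀ k, v k x = Finset.univ.sup' Finset.univ_nonempty (v · x) → v' k < r) :
    ∀ᶠ z in 𝓝[>] x,
      slope (fun y => Finset.univ.sup' Finset.univ_nonempty (v · y)) x z < r := by
  set G := fun y => Finset.univ.sup' Finset.univ_nonempty (v · y)
  have hG : ContinuousWithinAt G (Ioi x) x :=
    ContinuousWithinAt.finset_sup'_apply _ fun k _ => (hv k).continuousWithinAt
  have hk : ∀ k, ∀ᶠ z in 𝓝[>] x, v k z = G z → slope (v k) x z < r := by
    intro k
    rcases (Finset.le_sup' (v · x) (Finset.mem_univ k)).eq_or_lt with heq | hlt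
    · exact ((hasDerivWithinAt_iff_tendsto_slope' (lt_irrefl x)).1 (hv k)
        |>.eventually (Iio_mem_nhds (hr k heq))).mono fun z hz _ => hz
    · exact ((hv k).continuousWithinAt.eventually_lt hG hlt).mono fun z hz heq =>
        absurd heq hz.ne
  filter_upwards [eventually_all.2 hk, self_mem_nhdsWithin] with z hz hxz
  obtain ⟨k, -, hkz⟩ := Finset.exists_mem_eq_sup' Finset.univ_nonempty (v · z)
  calc slope G x z ≤ slope (v k) x z := by
        rw [slope_def_field, slope_def_field]
        gcongr
        · exact sub_nonneg.2 (le_of_lt hxz)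
        · exact hkz.le
        · exact Finset.le_sup' (v · x) (Finset.mem_univ k)
    _ < r := hz k hkz.symm

theorem frequently_slope_clamp_lt {g : ℝ → ℝ} {a b φ δ L : ℝ} (hg : ContinuousOn g (Icc a b))
    (hslope : ∀ x ∈ Ico a b, φ ≤ g x → g x ≤ φ + δ →
      ∀ r, L * (g x - φ) < r → ∃ᶠ z in 𝓝[>] x, slope g x z < r)
    {x r : ℝ} (hx : x ∈ Ico a b) (hr : max (L * (max (min (g x) (φ + δ)) φ - φ)) 0 < r) :
    ∃ᶠ z in 𝓝[>] x, slope (fun y => max (min (g y) (φ + δ)) φ) x z < r := by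
  set f : ℝ → ℝ := fun y => max (min (g y) (φ + δ)) φ with hf
  have hr0 : 0 < r := (le_max_right _ _).trans_lt hr
  have hg_right : Tendsto g (𝓝[>] x) (𝓝 (g x)) :=
    (hg x (Ico_subset_Icc_self hx)).mono_of_mem_nhdsWithin (Icc_mem_nhdsGT_of_mem hx)
  have of_const : (∀ᶠ z in 𝓝[>] x, f z = f x) → ∃ᶠ z in 𝓝[>] x, slope f x z < r := fun h =>
    (h.mono fun z hz => by rwa [slope_def_field, hz, sub_self, zero_div]).frequently
  rcases lt_or_ge (g x) φ with hlow | hge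
  · refine of_const ((hg_right.eventually (gt_mem_nhds hlow)).mono fun z hz => ?_)
    simp only [hf]
    rw [max_eq_right ((min_le_left _ _).trans hz.le),
      max_eq_right ((min_le_left _ _).trans hlow.le)]
  rcases le_or_gt (g x) (φ + δ) with hle | hhigh
  · have hfx : f x = g x := by simp only [hf]; rw [min_eq_left hle, max_eq_left hge]
    refine (hslope x hx hge hle r (by rw [← hfx]; exact (le_max_left _ _).trans_lt hr)).mp
      (eventually_mem_nhdsWithin.mono fun z (hxz : x < z) hz => ?_)
    rw [slope_def_field, hfx]
    rcases le_or_gt (f z) (g x) with hfz | hfz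
    · exact (div_nonpos_of_nonpos_of_nonneg (sub_nonpos.2 hfz) (sub_nonneg.2 hxz.le)).trans_lt hr0
    · have hfg : f z ≤ g z := by
        have : f z ≤ max (g z) φ := max_le_max (min_le_left _ _) le_rfl
        rw [max_def] at this
        split_ifs at this <;> linarith
      calc (f z - g x) / (z - x) ≤ slope g x z := by rw [slope_def_field]; gcongr
        _ < r := hz
  · refine of_const ((hg_right.eventually (lt_mem_nhds hhigh)).mono fun z hz => ?_)
    simp only [hf]
    rw [min_eq_right hz.le, min_eq_right hhigh.le]

theorem le_of_liminf_slope_right_le_mul_sub {g : ℝ → ℝ} {a b φ δ L : ℝ}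
    (hg : ContinuousOn g (Icc a b)) (ha : g a ≤ φ) (hδ : 0 < δ)
    (hslope : ∀ x ∈ Ico a b, φ ≤ g x → g x ≤ φ + δ →
      ∀ r, L * (g x - φ) < r → ∃ᶠ z in 𝓝[>] x, slope g x z < r) :
    ∀ x ∈ Icc a b, g x ≤ φ := by
  -- Clamping `g` to `[φ, φ + δ]` makes the slope bound hold everywhere, as fencing requires.
  set f : ℝ → ℝ := fun x => max (min (g x) (φ + δ)) φ with hf
  -- Any barrier rate strictly above `L` works; `|L| + 1` is one for every sign of `L`.
  have hf_barrier : ∀ ε > 0, ∀ x ∈ Icc a b, f x ≤ φ + ε * exp ((|L| + 1) * (x - a)) := by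
    intro ε hε
    refine image_le_of_liminf_slope_right_lt_deriv_boundary (f := f)
      (f' := fun x => max (L * (f x - φ)) 0) (by simp only [hf]; fun_prop)
      (fun x hx r hr => frequently_slope_clamp_lt hg hslope hx hr) ?_
      (B' := fun x => ε * ((|L| + 1) * exp ((|L| + 1) * (x - a)))) (fun x => ?_) ?_
    · simp only [hf, sub_self, mul_zero, exp_zero, mul_one]
      exact max_le ((min_le_left _ _).trans (ha.trans (by linarith))) (by linarith)
    · exact (((hasDerivAt_id x).sub_const a).const_mul (|L| + 1) |>.exp.const_mul ε).const_add φ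
        |>.congr_deriv (by simp only [id]; ring)
    · intro x _ hfx
      have hpos : 0 < ε * exp ((|L| + 1) * (x - a)) := by positivity
      rw [hfx, add_sub_cancel_left]
      refine max_lt ?_ (by positivity)
      nlinarith [le_abs_self L]
  intro x hx
  have hfx : f x ≤ φ := by
    refine le_of_forall_pos_le_add fun η hη => ?_
    have := hf_barrier (η / exp ((|L| + 1) * (x - a))) (by positivity) x hx
    rwa [div_mul_cancel₀ _ (exp_pos _).ne'] at this
  by_contra! hgx
  have : φ < f x := lt_max_of_lt_left (lt_min hgx (by linarith))
  linarith

theorem kuramoto_velocity_sub_le {ι : Type*} [Fintype ι] {K a : ℝ} (hK : 0 ≤ K) {ω θ : ι → ℝ}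
    {i j : ι} (hω : ω i - ω j ≤ a) (hi : ∀ k, θ k ≤ θ i) (hj : ∀ k, θ j ≤ θ k)
    (h2π : θ i - θ j ≤ 2 * π) :
    (ω i + ∑ k, K * sin (θ k - θ i)) - (ω j + ∑ k, K * sin (θ k - θ j)) ≤
      a - Fintype.card ι * K * sin (θ i - θ j) := by
  have hsum : ∑ k, (K * sin (θ k - θ i) - K * sin (θ k - θ j)) ≤
      ∑ _k : ι, -(K * sin (θ i - θ j)) :=
    Finset.sum_le_sum fun k _ => by
      rw [← mul_sub, ← mul_neg]
      exact mul_le_mul_of_nonneg_left (sin_sub_sub_sin_sub_le (hj k) (hi k) h2π) hK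
  rw [Finset.sum_sub_distrib, Finset.sum_const, Finset.card_univ, nsmul_eq_mul] at hsum
  linarith

theorem kuramoto_sub_le_of_initial {ι : Type*} [Fintype ι] [Nonempty ι] {K a φ : ℝ}
    (hK : 0 ≤ K) {ω : ι → ℝ} (hω : ∀ i j, ω i - ω j ≤ a) (hφ : a ≤ Fintype.card ι * K * sin φ)
    (hφ2π : φ < 2 * π) {θ : ℝ → ι → ℝ}
    (hθ : ∀ i t, HasDerivAt (fun s => θ s i) (ω i + ∑ j, K * sin (θ t j - θ t i)) t)
    (h0 : ∀ i j, θ 0 i - θ 0 j ≤ φ) {t : ℝ} (ht : 0 ≤ t) (i j : ι) : θ t i - θ t j ≤ φ := by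
  set g := fun s => Finset.univ.sup' Finset.univ_nonempty (fun p : ι × ι => θ s p.1 - θ s p.2)
  have hle_g : ∀ s k l, θ s k - θ s l ≤ g s := fun s k l =>
    Finset.le_sup' (fun p : ι × ι => θ s p.1 - θ s p.2) (Finset.mem_univ (k, l))
  have hg : ∀ s ∈ Icc 0 t, g s ≤ φ := by
    refine le_of_liminf_slope_right_le_mul_sub (δ := 2 * π - φ) (L := Fintype.card ι * K)
      ?_ (Finset.sup'_le _ _ fun p _ => h0 p.1 p.2) (by linarith) ?_
    · exact ContinuousOn.finset_sup'_apply _ fun p _ s _ =>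
        ((hθ p.1 s).continuousAt.sub (hθ p.2 s).continuousAt).continuousWithinAt
    intro x _ hφg hg2π r hr
    have hv : ∀ p : ι × ι, HasDerivWithinAt (fun y => θ y p.1 - θ y p.2)
        ((ω p.1 + ∑ k, K * sin (θ x k - θ x p.1)) - (ω p.2 + ∑ k, K * sin (θ x k - θ x p.2)))
        (Ioi x) x := fun p => ((hθ p.1 x).sub (hθ p.2 x)).hasDerivWithinAt
    refine Eventually.frequently (eventually_slope_sup'_lt hv ?_)
    rintro ⟨p, q⟩ (hpq : θ x p - θ x q = g x)
    have hp : ∀ k, θ x k ≤ θ x p := fun k => by linarith [hle_g x k q]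
    have hq : ∀ k, θ x q ≤ θ x k := fun k => by linarith [hle_g x p k]
    have hsin : sin φ - sin (g x) ≤ g x - φ := (le_abs_self _).trans <|
      (abs_sin_sub_sin_le _ _).trans (by rw [abs_sub_comm, abs_of_nonneg (by linarith)])
    calc _ ≤ a - Fintype.card ι * K * sin (g x) :=
          hpq ▸ kuramoto_velocity_sub_le hK (hω p q) hp hq (by rw [hpq]; linarith)
      _ ≤ Fintype.card ι * K * (sin φ - sin (g x)) := by linarith
      _ ≤ Fintype.card ι * K * (g x - φ) := by gcongr
      _ < r := hr
  exact (hle_g t i j).trans (hg t ⟨ht, le_rfl⟩)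

theorem stmt_18_general (n : ℕ) (K : ℝ) (hK : 0 < K)
    (ω : Fin n → ℝ) (a : ℝ)
    (ha : IsGreatest {v : ℝ | ∃ i j : Fin n, v = |ω i - ω j|} a)
    (haK : a < (n : ℝ) * K)
    (θ : ℝ → Fin n → ℝ)
    (hODE : ∀ i : Fin n, ∀ t : ℝ,
      HasDerivAt (fun s => θ s i)
        (ω i + ∑ j, K * Real.sin (θ t j - θ t i)) t) :
    ∀ φ : ℝ, φ ∈ Set.Icc (Real.arcsin (a / ((n : ℝ) * K)))
        (π - Real.arcsin (a / ((n : ℝ) * K))) →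
      (∀ i j : Fin n, |θ 0 i - θ 0 j| ≤ φ) →
      ∀ t ≥ (0 : ℝ), ∀ i j : Fin n, |θ t i - θ t j| ≤ φ := by
  intro φ hφ h0 t ht i j
  have : Nonempty (Fin n) := ⟨i⟩
  have hnK : 0 < (n : ℝ) * K := mul_pos (by exact_mod_cast i.pos) hK
  have ha0 : 0 ≤ a := by
    obtain ⟨i, j, rfl⟩ := ha.1
    exact abs_nonneg _
  have hc : a / (n * K) ∈ Icc (-1 : ℝ) 1 :=
    ⟨by linarith [div_nonneg ha0 hnK.le], ((div_lt_one hnK).2 haK).le⟩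
  have hsin : a ≤ Fintype.card (Fin n) * K * sin φ := by
    rw [Fintype.card_fin, ← div_le_iff₀' hnK]
    exact le_sin_of_arcsin_le_of_le_pi_sub hc hφ.1 hφ.2
  have hφ2π : φ < 2 * π := by linarith [hφ.2, neg_pi_div_two_le_arcsin (a / (n * K)), pi_pos]
  have hω : ∀ i j, ω i - ω j ≤ a := fun i j => (le_abs_self _).trans (ha.2 ⟨i, j, rfl⟩)
  have key := kuramoto_sub_le_of_initial hK.le hω hsin hφ2π hODE
    (fun i j => (le_abs_self _).trans (h0 i j)) ht
  exact abs_sub_le_iff.2 ⟨key i j, key j i⟩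

/-- for the Kuramoto system `θ̇_i = ω_i + ∑_j K·sin(θ_j − θ_i)` on the
complete graph with uniform coupling `K`, if `n·K > a := max_{i,j} |ω_i − ω_j|`, then
for every `φ ∈ [arcsin(a/(nK)), π − arcsin(a/(nK))]` the set
`{θ : max_{i,j}|θ_i − θ_j| ≤ φ}` is positively invariant. -/
theorem stmt_18 (n : ℕ) (hn : 0 < n) (K : ℝ) (hK : 0 < K)
    (ω : Fin n → ℝ) (a : ℝ)
    (ha : IsGreatest {v : ℝ | ∃ i j : Fin n, v = |ω i - ω j|} a)
    (haK : a < (n : ℝ) * K)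
    (θ : ℝ → Fin n → ℝ)
    (hODE : ∀ i : Fin n, ∀ t : ℝ,
      HasDerivAt (fun s => θ s i)
        (ω i + ∑ j, K * Real.sin (θ t j - θ t i)) t) :
    ∀ φ : ℝ, φ ∈ Set.Icc (Real.arcsin (a / ((n : ℝ) * K)))
        (π - Real.arcsin (a / ((n : ℝ) * K))) →
      (∀ i j : Fin n, |θ 0 i - θ 0 j| ≤ φ) →
      ∀ t ≥ (0 : ℝ), ∀ i j : Fin n, |θ t i - θ t j| ≤ φ :=
  stmt_18_general n K hK ω a ha haK θ hODE
end
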